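/- arXiv:2505.21466 — 3 statements merged into one kernel-verified Lean document; each statement's English description precedes it below -/
import Mathlib

section
/- Let γ > 0, β ≠ 0, c ∈ ℝ, T > 0, and let φ : ℝ → ℝ be a smooth, nonconstant, T-periodic function with ∫₀ᵀ φ = 0 satisfying the profile equation (−cφ' + φφ' + βφ''')' = γφ. Assume the nondegeneracy condition: for every smooth T-periodic f : ℝ → ℝ with ∫₀ᵀ f = 0, if the function −γ ∂⁻²f − cf + φf + βf'' is constant on ℝ, then f is a scalar multiple of φ'. Then every smooth T-periodic function h : ℝ → ℝ satisfying γh + ((c−φ)h − βh'')'' = 0 is a scalar multiple of φ'. -/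
open intervalIntegral
open scoped ContDiff

private lemma periodic_deriv' {f : ℝ → ℝ} {T : ℝ} (hp : Function.Periodic f T) :
    Function.Periodic (deriv f) T := by
  intro x
  have : (fun y => f (y + T)) = f := funext fun y => hp y
  calc deriv f (x + T) = deriv (fun y => f (y + T)) x := (deriv_comp_add_const ..).symm
    _ = deriv f x := by rw [this]

/-- mean-zero periodic antiderivative of a continuous mean-zero periodic function -/
private lemma antideriv {T : ℝ} (hT : 0 < T) {f : ℝ → ℝ} (hf : Continuous f)
    (hp : Function.Periodic f T) (hm : (∫ x in (0:ℝ)..T, f x) = 0) :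
    ∃ F : ℝ → ℝ, Function.Periodic F T ∧ (∀ x, HasDerivAt F (f x) x) ∧
      (∫ x in (0:ℝ)..T, F x) = 0 := by
  set G : ℝ → ℝ := fun x => ∫ t in (0:ℝ)..x, f t with hG
  have hint : ∀ a b : ℝ, IntervalIntegrable f MeasureTheory.volume a b :=
    fun a b => hf.intervalIntegrable a b
  have hGd : ∀ x, HasDerivAt G (f x) x := fun x =>
    integral_hasDerivAt_right (hint 0 x) (hf.stronglyMeasurableAtFilter _ _)
      hf.continuousAt
  have hGp : Function.Periodic G T := by
    intro x
    have h1 : G (x + T) = G x + ∫ t in x..(x + T), f t :=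
      (integral_add_adjacent_intervals (hint 0 x) (hint x (x + T))).symm
    have h2 : (∫ t in x..(x + T), f t) = ∫ t in (0:ℝ)..(0 + T), f t :=
      hp.intervalIntegral_add_eq x 0
    rw [h1, h2, zero_add, hm, add_zero]
  have hGc : Continuous G :=
    continuous_iff_continuousAt.2 fun x => (hGd x).continuousAt
  refine ⟨fun x => G x - (∫ t in (0:ℝ)..T, G t) / T, ?_, ?_, ?_⟩
  · intro x; simp [hGp x]
  · intro x; simpa using (hGd x).sub_const ((∫ t in (0:ℝ)..T, G t) / T)
  · have hGi : IntervalIntegrable G MeasureTheory.volume 0 T :=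
      hGc.intervalIntegrable 0 T
    rw [integral_sub hGi (intervalIntegrable_const)]
    rw [integral_const]
    rw [sub_zero, smul_eq_mul]
    field_simp
    simp

/-- **kernel of the linearized operator.** Let `φ` be a smooth, nonconstant,
mean-zero, `T`-periodic solution of the profile equation `(−cφ' + φφ' + βφ''')' = γφ`
with `γ > 0`, `β ≠ 0`.  Assume the nondegeneracy condition: every smooth mean-zero
`T`-periodic `f` for which `−γ∂⁻²f − cf + φf + βf''` is constant is a multiple of `φ'`.
Then every smooth `T`-periodic `h` with `γh + ((c−φ)h − βh'')'' = 0` is a multiple of `φ'`. -/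
theorem kernel_of_linearization
    (γ β c T : ℝ) (hγ : 0 < γ) (hβ : β ≠ 0) (hT : 0 < T)
    (φ : ℝ → ℝ) (hφ : ContDiff ℝ (⊤ : ℕ∞) φ) (hφp : Function.Periodic φ T)
    (hnc : ∃ x y : ℝ, φ x ≠ φ y)
    (hmean : (∫ x in (0:ℝ)..T, φ x) = 0)
    (heq : ∀ x : ℝ,
      deriv (fun y => -c * deriv φ y + φ y * deriv φ y + β * iteratedDeriv 3 φ y) x
        = γ * φ x)
    -- nondegeneracy of the Hessian `−γ∂⁻² − c + φ + β∂²` on mean-zero periodic functions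
    (hnd : ∀ f F₁ F₂ : ℝ → ℝ,
      ContDiff ℝ (⊤ : ℕ∞) f → Function.Periodic f T → (∫ x in (0:ℝ)..T, f x) = 0 →
      Function.Periodic F₁ T → (∀ x, deriv F₁ x = f x) → (∫ x in (0:ℝ)..T, F₁ x) = 0 →
      Function.Periodic F₂ T → (∀ x, deriv F₂ x = F₁ x) → (∫ x in (0:ℝ)..T, F₂ x) = 0 →
      (∃ K : ℝ, ∀ x : ℝ,
        -γ * F₂ x - c * f x + φ x * f x + β * iteratedDeriv 2 f x = K) →
      ∃ a : ℝ, ∀ x : ℝ, f x = a * deriv φ x) :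
    ∀ h : ℝ → ℝ, ContDiff ℝ (⊤ : ℕ∞) h → Function.Periodic h T →
      (∀ x : ℝ,
        γ * h x + iteratedDeriv 2 (fun y => (c - φ y) * h y - β * iteratedDeriv 2 h y) x
          = 0) →
      ∃ a : ℝ, ∀ x : ℝ, h x = a * deriv φ x := by
  intro h hh hhp hheq
  set g : ℝ → ℝ := fun y => (c - φ y) * h y - β * iteratedDeriv 2 h y with hgdef
  -- smoothness facts
  have hh' : ContDiff ℝ ∞ h := hh.of_le (by simp)
  have hφ' : ContDiff ℝ ∞ φ := hφ.of_le (by simp)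
  have hdh : ContDiff ℝ ∞ (deriv h) := (contDiff_infty_iff_deriv.mp hh').2
  have hd2h : ContDiff ℝ ∞ (iteratedDeriv 2 h) := by
    rw [show (2:ℕ) = 1 + 1 from rfl, iteratedDeriv_succ, iteratedDeriv_one]
    exact (contDiff_infty_iff_deriv.mp hdh).2
  have hg : ContDiff ℝ ∞ g :=
    ((contDiff_const.sub hφ').mul hh').sub (contDiff_const.mul hd2h)
  have hdg : ContDiff ℝ ∞ (deriv g) := (contDiff_infty_iff_deriv.mp hg).2
  have hone : (1 : WithTop ℕ∞) ≤ ∞ := by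
    exact_mod_cast OrderTop.le_top _
  -- periodicity facts
  have hd2hp : Function.Periodic (iteratedDeriv 2 h) T := by
    rw [show (2:ℕ) = 1 + 1 from rfl, iteratedDeriv_succ, iteratedDeriv_one]
    exact periodic_deriv' (periodic_deriv' hhp)
  have hgp : Function.Periodic g T := by
    intro x; simp only [hgdef, hhp x, hφp x, hd2hp x]
  have hdgp : Function.Periodic (deriv g) T := periodic_deriv' hgp
  -- iteratedDeriv 2 g as deriv (deriv g)
  have hI2g : iteratedDeriv 2 g = deriv (deriv g) := by
    rw [show (2:ℕ) = 1 + 1 from rfl, iteratedDeriv_succ, iteratedDeriv_one]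
  -- h has mean zero
  have hhm : (∫ x in (0:ℝ)..T, h x) = 0 := by
    have h1 : ∀ x, h x = -(1/γ) * iteratedDeriv 2 g x := by
      intro x
      have := hheq x
      field_simp
      linarith
    have h2 : (∫ x in (0:ℝ)..T, iteratedDeriv 2 g x) = 0 := by
      rw [hI2g]
      rw [integral_deriv_eq_sub (fun x _ => (hdg.differentiable (by simp)).differentiableAt)
        ((hdg.continuous_deriv hone).intervalIntegrable 0 T)]
      have := hdgp 0
      rw [zero_add] at this
      rw [this, sub_self]
    calc (∫ x in (0:ℝ)..T, h x) = ∫ x in (0:ℝ)..T, -(1/γ) * iteratedDeriv 2 g x := by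
          simp_rw [h1]
      _ = -(1/γ) * ∫ x in (0:ℝ)..T, iteratedDeriv 2 g x := integral_const_mul _ _
      _ = 0 := by rw [h2, mul_zero]
  -- antiderivatives
  obtain ⟨F₁, hF₁p, hF₁d, hF₁m⟩ := antideriv hT (hh.continuous) hhp hhm
  have hF₁c : Continuous F₁ :=
    continuous_iff_continuousAt.2 fun x => (hF₁d x).continuousAt
  obtain ⟨F₂, hF₂p, hF₂d, hF₂m⟩ := antideriv hT hF₁c hF₁p hF₁m
  -- the function u = γ F₂ + g
  set u : ℝ → ℝ := fun x => γ * F₂ x + g x with hudef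
  set v : ℝ → ℝ := fun x => γ * F₁ x + deriv g x with hvdef
  have hud : ∀ x, HasDerivAt u (v x) x := fun x =>
    ((hF₂d x).const_mul γ).add ((hg.differentiable (by simp) x).hasDerivAt.congr_deriv rfl)
  have hvd : ∀ x, HasDerivAt v 0 x := by
    intro x
    have h1 : HasDerivAt v (γ * h x + deriv (deriv g) x) x :=
      ((hF₁d x).const_mul γ).add ((hdg.differentiable (by simp) x).hasDerivAt)
    have h2 : γ * h x + deriv (deriv g) x = 0 := by
      rw [← hI2g]; exact hheq x
    rwa [h2] at h1
  -- v is constant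
  have hvconst : ∀ x, v x = v 0 :=
    fun x => is_const_of_deriv_eq_zero (fun y => (hvd y).differentiableAt)
      (fun y => (hvd y).deriv) x 0
  -- u x = u 0 + v 0 * x
  have huaff : ∀ x, u x = u 0 + v 0 * x := by
    intro x
    have hw : ∀ y, HasDerivAt (fun z => u z - v 0 * z) 0 y := by
      intro y
      have := (hud y).sub ((hasDerivAt_id y).const_mul (v 0))
      rw [hvconst y] at this
      simp only [mul_one, sub_self] at this
      exact this
    have := is_const_of_deriv_eq_zero (fun y => (hw y).differentiableAt)
      (fun y => (hw y).deriv) x 0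
    simp only [mul_zero, sub_zero] at this
    linarith
  have hup : Function.Periodic u T := fun x => by
    simp only [hudef, hF₂p x, hgp x]
  have hv0 : v 0 = 0 := by
    have h1 := huaff T
    have h2 := hup 0
    rw [zero_add] at h2
    have h3 := huaff 0
    rw [mul_zero, add_zero] at h3
    rw [h2, h3] at h1
    have : v 0 * T = 0 := by linarith
    exact (mul_eq_zero.mp this).resolve_right (ne_of_gt hT)
  have huconst : ∀ x, u x = u 0 := by
    intro x; rw [huaff x, hv0, zero_mul, add_zero]
  -- apply nondegeneracy
  refine hnd h F₁ F₂ hh hhp hhm hF₁p (fun x => (hF₁d x).deriv) hF₁m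
    hF₂p (fun x => (hF₂d x).deriv) hF₂m ⟨-(u 0), fun x => ?_⟩
  have hux : u x = γ * F₂ x + ((c - φ x) * h x - β * iteratedDeriv 2 h x) := rfl
  have hu0 : u 0 = γ * F₂ 0 + ((c - φ 0) * h 0 - β * iteratedDeriv 2 h 0) := rfl
  linarith [huconst x, hux, hu0]
end

section
/- Let γ > 0, β ≠ 0, c ∈ ℝ, T > 0, and let φ : ℝ → ℝ be a smooth, nonconstant, T-periodic function with ∫₀ᵀ φ = 0 satisfying the profile equation (−cφ' + φφ' + βφ''')' = γφ, and assume that every smooth T-periodic function h with γh + ((c−φ)h − βh'')'' = 0 is a scalar multiple of φ'. Suppose ψ : ℝ → ℝ is a smooth T-periodic function and s ∈ ℝ are such that γψ + ((c−φ)ψ − βψ'')'' = s φ'' and ∫₀ᵀ φψ ≠ 0. Then s ≠ 0. -/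
/-- **`∂c/∂P ≠ 0`.** Let `φ` be a smooth, nonconstant, mean-zero,
`T`-periodic solution of the profile equation `(−cφ' + φφ' + βφ''')' = γφ` with
`γ > 0`, `β ≠ 0`, whose linearization `L[φ]h = γh + ((c−φ)h − βh'')''` has kernel
spanned by `φ'`.  If a smooth `T`-periodic `ψ` satisfies `L[φ]ψ = s φ''` and
`∫₀ᵀ φψ ≠ 0`, then `s ≠ 0`. -/
theorem wave_speed_momentum_derivative_ne_zero
    (γ β c T : ℝ) (hγ : 0 < γ) (hβ : β ≠ 0) (hT : 0 < T)
    (φ : ℝ → ℝ) (hφ : ContDiff ℝ (⊤ : ℕ∞) φ) (hφp : Function.Periodic φ T)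
    (hnc : ∃ x y : ℝ, φ x ≠ φ y)
    (hmean : (∫ x in (0:ℝ)..T, φ x) = 0)
    (heq : ∀ x : ℝ,
      deriv (fun y => -c * deriv φ y + φ y * deriv φ y + β * iteratedDeriv 3 φ y) x
        = γ * φ x)
    -- the kernel of `L[φ]` is spanned by `φ'`
    (hker : ∀ h : ℝ → ℝ, ContDiff ℝ (⊤ : ℕ∞) h → Function.Periodic h T →
      (∀ x : ℝ,
        γ * h x + iteratedDeriv 2 (fun y => (c - φ y) * h y - β * iteratedDeriv 2 h y) x
          = 0) →
      ∃ a : ℝ, ∀ x : ℝ, h x = a * deriv φ x)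
    (ψ : ℝ → ℝ) (s : ℝ)
    (hψ : ContDiff ℝ (⊤ : ℕ∞) ψ) (hψp : Function.Periodic ψ T)
    (hψeq : ∀ x : ℝ,
      γ * ψ x + iteratedDeriv 2 (fun y => (c - φ y) * ψ y - β * iteratedDeriv 2 ψ y) x
        = s * iteratedDeriv 2 φ x)
    (hint : (∫ x in (0:ℝ)..T, φ x * ψ x) ≠ 0) :
    s ≠ 0 := by
  intro hs
  subst hs
  obtain ⟨a, ha⟩ := hker ψ hψ hψp (by simpa using hψeq)
  apply hint
  have h1 : (∫ x in (0:ℝ)..T, φ x * ψ x) = ∫ x in (0:ℝ)..T, a * deriv (fun y => φ y ^ 2 / 2) x := by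
    apply intervalIntegral.integral_congr
    intro x _
    have hd : deriv (fun y => φ y ^ 2 / 2) x = φ x * deriv φ x := by
      have hdiff : DifferentiableAt ℝ φ x := (hφ.differentiable (by simp)) x
      have := (hdiff.pow 2).div_const 2
      rw [deriv_div_const, deriv_fun_pow hdiff 2]
      ring
    simp only [ha x, hd]
    ring
  rw [h1, intervalIntegral.integral_const_mul,
    intervalIntegral.integral_deriv_eq_sub (fun x _ => show DifferentiableAt ℝ (fun y => φ y ^ 2 / 2) x from ((hφ.differentiable (by simp)) x |>.pow 2).div_const 2)]
  · rw [show φ T = φ 0 from by simpa using hφp 0]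
    ring
  · apply Continuous.intervalIntegrable
    have hc : Continuous (fun x => φ x * deriv φ x) :=
      (hφ.continuous).mul (hφ.continuous_deriv (by simp))
    have heq' : deriv (fun y => φ y ^ 2 / 2) = fun x => φ x * deriv φ x := by
      funext x
      have hdiff : DifferentiableAt ℝ φ x := (hφ.differentiable (by simp)) x
      rw [deriv_div_const, deriv_fun_pow hdiff 2]; ring
    rw [heq']; exact hc
end

section
/- Let γ > 0 and β ∈ ℝ. Define ω₀ : (0,∞) → ℝ by ω₀(k) = γ/(4π²k) − 4βπ²k³ and ω₂ : (0,∞) → ℝ by ω₂(k) = 2k³π²/(3(γ + 64βπ⁴k⁴)). Then for every k > 0 with γ + 64βπ⁴k⁴ ≠ 0, the second derivative of ω₀ satisfies ω₀''(k)·ω₂(k) = (γ − 48βπ⁴k⁴)/(3(γ + 64βπ⁴k⁴)). In particular, if β > 0 then ω₀''(k)ω₂(k) > 0 for 0 < k⁴ < γ/(48βπ⁴) and ω₀''(k)ω₂(k) < 0 for k⁴ > γ/(48βπ⁴). -/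
open Real

private lemma lh_hasDerivAt (γ β : ℝ) {s : ℝ} (hs : s ≠ 0) :
    HasDerivAt (fun s : ℝ => γ / (4 * π^2 * s) - 4 * β * π^2 * s^3)
      (-(γ / (4 * π^2)) * (s^2)⁻¹ - 12 * β * π^2 * s^2) s := by
  have h1 : HasDerivAt (fun s : ℝ => γ / (4 * π^2) * s⁻¹)
      (γ / (4 * π^2) * (-(s^2)⁻¹)) s := (hasDerivAt_inv hs).const_mul _
  have h2 : HasDerivAt (fun s : ℝ => 4 * β * π^2 * s^3)
      (4 * β * π^2 * (3 * s^2)) s := by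
    simpa using (hasDerivAt_pow 3 s).const_mul (4 * β * π^2)
  have h : HasDerivAt (fun s : ℝ => γ / (4 * π^2) * s⁻¹ - 4 * β * π^2 * s^3) _ s := h1.sub h2
  have hfun : (fun s : ℝ => γ / (4 * π^2) * s⁻¹ - 4 * β * π^2 * s^3)
      = (fun s : ℝ => γ / (4 * π^2 * s) - 4 * β * π^2 * s^3) := by
    funext t
    simp [div_eq_mul_inv, mul_inv]; ring
  rw [hfun] at h
  convert h using 1
  ring

private lemma lh_deriv2 (γ β : ℝ) {k : ℝ} (hk : 0 < k) :
    iteratedDeriv 2 (fun s : ℝ => γ / (4 * π^2 * s) - 4 * β * π^2 * s^3) k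
      = γ / (2 * π^2 * k^3) - 24 * β * π^2 * k := by
  have hk0 : k ≠ 0 := hk.ne'
  have hev : ∀ᶠ s in nhds k,
      deriv (fun s : ℝ => γ / (4 * π^2 * s) - 4 * β * π^2 * s^3) s
        = -(γ / (4 * π^2)) * (s^2)⁻¹ - 12 * β * π^2 * s^2 := by
    filter_upwards [eventually_ne_nhds hk0] with s hs using (lh_hasDerivAt γ β hs).deriv
  have h1 : HasDerivAt (fun s : ℝ => -(γ / (4 * π^2)) * (s^2)⁻¹)
      (-(γ / (4 * π^2)) * (-(2 * k) / (k^2)^2)) k := by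
    have : HasDerivAt (fun s : ℝ => -(γ / (4 * π^2)) * (s^2)⁻¹) _ k := ((hasDerivAt_pow 2 k).inv (pow_ne_zero 2 hk0)).const_mul (-(γ / (4 * π^2)))
    convert this using 1
    ring
  have h2 : HasDerivAt (fun s : ℝ => 12 * β * π^2 * s^2)
      (12 * β * π^2 * (2 * k)) k := by
    simpa using (hasDerivAt_pow 2 k).const_mul (12 * β * π^2)
  have hD := (h1.sub h2).deriv
  have key : deriv (deriv (fun s : ℝ => γ / (4 * π^2 * s) - 4 * β * π^2 * s^3)) k
      = -(γ / (4 * π^2)) * (-(2 * k) / (k^2)^2) - 12 * β * π^2 * (2 * k) := by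
    rw [Filter.EventuallyEq.deriv_eq hev]; exact hD
  rw [iteratedDeriv_succ, iteratedDeriv_one, key]
  have hπ : π ≠ 0 := pi_ne_zero
  field_simp
  ring

/-- **Lighthill discriminant for Stokes waves.** With
`ω₀(k) = γ/(4π²k) − 4βπ²k³` and `ω₂(k) = 2k³π²/(3(γ + 64βπ⁴k⁴))`, for every `k > 0` with
`γ + 64βπ⁴k⁴ ≠ 0` one has `ω₀''(k)ω₂(k) = (γ − 48βπ⁴k⁴)/(3(γ + 64βπ⁴k⁴))`; in particular,
when `β > 0` this quantity is positive for `k⁴ < γ/(48βπ⁴)` and negative for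
`k⁴ > γ/(48βπ⁴)`. -/
theorem lighthill_discriminant
    (γ β : ℝ) (hγ : 0 < γ) :
    ∀ k : ℝ, 0 < k → γ + 64 * β * π^4 * k^4 ≠ 0 →
      (iteratedDeriv 2 (fun s : ℝ => γ / (4 * π^2 * s) - 4 * β * π^2 * s^3) k)
          * (2 * k^3 * π^2 / (3 * (γ + 64 * β * π^4 * k^4)))
        = (γ - 48 * β * π^4 * k^4) / (3 * (γ + 64 * β * π^4 * k^4))
      ∧ (0 < β →
          (k^4 < γ / (48 * β * π^4) →
            0 < (iteratedDeriv 2 (fun s : ℝ => γ / (4 * π^2 * s) - 4 * β * π^2 * s^3) k)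
                  * (2 * k^3 * π^2 / (3 * (γ + 64 * β * π^4 * k^4))))
          ∧ (γ / (48 * β * π^4) < k^4 →
            (iteratedDeriv 2 (fun s : ℝ => γ / (4 * π^2 * s) - 4 * β * π^2 * s^3) k)
                  * (2 * k^3 * π^2 / (3 * (γ + 64 * β * π^4 * k^4))) < 0)) := by
  intro k hk hden
  have hπ : π ≠ 0 := pi_ne_zero
  have hk0 : k ≠ 0 := hk.ne'
  have heq : (iteratedDeriv 2 (fun s : ℝ => γ / (4 * π^2 * s) - 4 * β * π^2 * s^3) k)
          * (2 * k^3 * π^2 / (3 * (γ + 64 * β * π^4 * k^4)))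
        = (γ - 48 * β * π^4 * k^4) / (3 * (γ + 64 * β * π^4 * k^4)) := by
    rw [lh_deriv2 γ β hk]
    field_simp
    ring
  refine ⟨heq, fun hβ => ⟨fun hlt => ?_, fun hgt => ?_⟩⟩
  · rw [heq]
    have hnum : 0 < γ - 48 * β * π^4 * k^4 := by
      have := (lt_div_iff₀ (by positivity : (0:ℝ) < 48 * β * π^4)).mp hlt
      nlinarith
    have hpos : 0 < 3 * (γ + 64 * β * π^4 * k^4) := by positivity
    exact div_pos hnum hpos
  · rw [heq]
    have hnum : γ - 48 * β * π^4 * k^4 < 0 := by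
      have := (div_lt_iff₀ (by positivity : (0:ℝ) < 48 * β * π^4)).mp hgt
      nlinarith
    have hpos : 0 < 3 * (γ + 64 * β * π^4 * k^4) := by positivity
    exact div_neg_of_neg_of_pos hnum hpos
end
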